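/- Let f ∈ ℝ³, let skew(f) be the 3×3 skew-symmetric matrix with skew(f)x = f × x, and define dcay_f := (1/(1 + ‖f/2‖²)) (I + (1/2) skew(f)) and dcay_f⁻¹ := I − (1/2) skew(f) + (1/4) f fᵀ. Then these two matrices are mutually inverse: dcay_f⁻¹ · dcay_f = I and dcay_f · dcay_f⁻¹ = I. -/
import Mathlib


open Matrix

noncomputable section

/-- `skew3 ξ` is the skew-symmetric matrix with `skew3 ξ *ᵥ x = ξ × x`. -/
def skew3 (ξ : Fin 3 → ℝ) : Matrix (Fin 3) (Fin 3) ℝ :=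
  !![0, -ξ 2, ξ 1; ξ 2, 0, -ξ 0; -ξ 1, ξ 0, 0]

/-- The right-trivialized tangent of the Cayley transform:
`dcay_f = (1/(1 + ‖f/2‖²)) (I + (1/2) skew f)`. -/
def dcay (f : EuclideanSpace ℝ (Fin 3)) : Matrix (Fin 3) (Fin 3) ℝ :=
  (1 + ‖(2⁻¹ : ℝ) • f‖ ^ 2)⁻¹ • (1 + (2⁻¹ : ℝ) • skew3 f)

/-- Its claimed inverse: `dcay_f⁻¹ = I − (1/2) skew f + (1/4) f fᵀ`. -/
def dcayInv (f : EuclideanSpace ℝ (Fin 3)) : Matrix (Fin 3) (Fin 3) ℝ :=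
  1 - (2⁻¹ : ℝ) • skew3 f + (4⁻¹ : ℝ) • vecMulVec f f

lemma skew3_mul_skew3 (f : Fin 3 → ℝ) :
    skew3 f * skew3 f
      = vecMulVec f f - (f 0 ^ 2 + f 1 ^ 2 + f 2 ^ 2) • (1 : Matrix (Fin 3) (Fin 3) ℝ) := by
  ext i j
  fin_cases i <;> fin_cases j <;>
    simp [skew3, Matrix.mul_apply, Fin.sum_univ_three, vecMulVec_apply, Matrix.one_apply] <;>
    ring

lemma vecMulVec_mul_skew3 (f : Fin 3 → ℝ) :
    vecMulVec f f * skew3 f = 0 := by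
  ext i j
  fin_cases i <;> fin_cases j <;>
    simp [skew3, Matrix.mul_apply, Fin.sum_univ_three, vecMulVec_apply] <;> ring

lemma skew3_mul_vecMulVec (f : Fin 3 → ℝ) :
    skew3 f * vecMulVec f f = 0 := by
  ext i j
  fin_cases i <;> fin_cases j <;>
    simp [skew3, Matrix.mul_apply, Fin.sum_univ_three, vecMulVec_apply] <;> ring

/-- The matrices `dcay_f` and `dcay_f⁻¹ = I − (1/2) skew f + (1/4) f fᵀ` are mutually
inverse. -/
theorem dcay_mul_dcayInv (f : EuclideanSpace ℝ (Fin 3)) :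
    dcayInv f * dcay f = 1 ∧ dcay f * dcayInv f = 1 := by
  have hn : ‖(2⁻¹ : ℝ) • f‖ ^ 2 = (f 0 ^ 2 + f 1 ^ 2 + f 2 ^ 2) / 4 := by
    rw [EuclideanSpace.norm_eq, Real.sq_sqrt (by positivity)]
    simp only [Fin.sum_univ_three, PiLp.smul_apply, smul_eq_mul, Real.norm_eq_abs, sq_abs]
    ring
  have hne : (1 + ‖(2⁻¹ : ℝ) • f‖ ^ 2) ≠ 0 := by positivity
  have key1 : dcayInv f * (1 + (2⁻¹ : ℝ) • skew3 f)
      = (1 + ‖(2⁻¹ : ℝ) • f‖ ^ 2) • (1 : Matrix (Fin 3) (Fin 3) ℝ) := by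
    rw [dcayInv, hn]
    simp only [add_mul, sub_mul, mul_add, mul_one, one_mul, Matrix.smul_mul,
      Matrix.mul_smul, smul_smul, skew3_mul_skew3 f, vecMulVec_mul_skew3 f, smul_sub,
      smul_zero]
    module
  have key2 : (1 + (2⁻¹ : ℝ) • skew3 f) * dcayInv f
      = (1 + ‖(2⁻¹ : ℝ) • f‖ ^ 2) • (1 : Matrix (Fin 3) (Fin 3) ℝ) := by
    rw [dcayInv, hn]
    simp only [add_mul, sub_mul, mul_sub, mul_add, mul_one, one_mul, Matrix.smul_mul,
      Matrix.mul_smul, smul_smul, skew3_mul_skew3 f, skew3_mul_vecMulVec f, smul_sub,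
      smul_zero]
    module
  constructor
  · rw [dcay, Matrix.mul_smul, key1, smul_smul, inv_mul_cancel₀ hne, one_smul]
  · rw [dcay, Matrix.smul_mul, key2, smul_smul, inv_mul_cancel₀ hne, one_smul]
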